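/- Let G(x,t,ξ,τ) be the one-dimensional heat kernel and let s, s₁ : [0,σ] → ℝ satisfy |s(t) − s₁(τ)| ≥ Λ > 0 for all 0 ≤ τ < t ≤ σ. Then for all t ∈ (0,σ], ∫₀ᵗ |∂G/∂x(s(t),t,s₁(τ),τ)| dτ ≤ π^{−1/2} ∫_{Λ/√(8σ)}^{∞} z^{−1} e^{−z²} dz. -/

import Mathlib

/-!
With `r = t - τ` and `y = x - ξ`, the kernel derivative is `|y| / (2r) · e^{-y²/(4r)} / √(4πr)`.
Splitting `e^{-y²/(4r)} = e^{-y²/(8r)} · e^{-y²/(8r)}` and using `w e^{-w²/2} ≤ 1` for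
`w = |y| / (2√r)` gives `|∂ₓG| ≤ (4π)^{-1/2} r⁻¹ e^{-Λ²/(8r)}` once `|y| ≥ Λ`. The integral over
`τ ∈ (0, t)` is at most the integral of this bound over `r ∈ (0, σ)`, and the substitution `r = Λ² / (8z²)`
turns `∫₀^σ r⁻¹ e^{-Λ²/(8r)} dr` into `2 ∫_{Λ/√(8σ)}^∞ z⁻¹ e^{-z²} dz`.
-/

open Real MeasureTheory Set

lemma mul_exp_neg_sq_div_two_le_one (w : ℝ) : w * exp (-(w ^ 2 / 2)) ≤ 1 := by
  have hw : w ≤ exp (w ^ 2 / 2) := by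
    nlinarith [add_one_le_exp (w ^ 2 / 2), sq_nonneg (w - 1)]
  calc w * exp (-(w ^ 2 / 2)) ≤ exp (w ^ 2 / 2) * exp (-(w ^ 2 / 2)) := by gcongr
    _ = 1 := by rw [← exp_add, add_neg_cancel, exp_zero]

/-- `heatKernel (t - τ) (x - ξ)` is the paper's `G(x, t, ξ, τ)`. -/
noncomputable def heatKernel (r y : ℝ) : ℝ := exp (-y ^ 2 / (4 * r)) / sqrt (4 * π * r)

lemma hasDerivAt_heatKernel (r y : ℝ) :
    HasDerivAt (heatKernel r) (-(y / (2 * r)) * heatKernel r y) y := by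
  have hexponent : HasDerivAt (fun x => -x ^ 2 / (4 * r)) (-(2 * y) / (4 * r)) y := by
    simpa using (hasDerivAt_pow 2 y).neg.div_const (4 * r)
  refine (hexponent.exp.div_const (sqrt (4 * π * r))).congr_deriv ?_
  unfold heatKernel
  ring

lemma abs_deriv_heatKernel_le {r : ℝ} (hr : 0 < r) (y : ℝ) :
    |deriv (heatKernel r) y| ≤ (2 * sqrt π)⁻¹ * (r⁻¹ * exp (-y ^ 2 / (8 * r))) := by
  have hsqrt : sqrt (4 * π * r) = 2 * sqrt π * sqrt r := by
    rw [sqrt_mul (by positivity), sqrt_mul (by norm_num), show (4 : ℝ) = 2 ^ 2 by norm_num,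
      sqrt_sq zero_le_two]
  set w := |y| / (2 * sqrt r)
  set E := exp (-y ^ 2 / (8 * r))
  have hw : w ^ 2 / 2 = y ^ 2 / (8 * r) := by
    rw [div_pow, mul_pow, sq_abs, sq_sqrt hr.le]; ring
  have hsplit : exp (-y ^ 2 / (4 * r)) = E * E := by
    rw [← exp_add]; congr 1; field_simp; ring
  have hbound := mul_exp_neg_sq_div_two_le_one w
  rw [hw, ← neg_div] at hbound
  have hderiv : |deriv (heatKernel r) y| = (2 * sqrt π)⁻¹ * (r⁻¹ * E) * (w * E) := by
    rw [(hasDerivAt_heatKernel r y).deriv, heatKernel, hsplit, hsqrt, abs_mul, abs_neg, abs_div,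
      abs_of_pos (by positivity : (0 : ℝ) < 2 * r),
      abs_of_pos (by positivity : 0 < E * E / (2 * sqrt π * sqrt r))]
    have hr' : r = sqrt r * sqrt r := (mul_self_sqrt hr.le).symm
    simp only [w]
    rw [hr']
    field_simp
  rw [hderiv]
  exact (mul_le_mul_of_nonneg_left hbound (by positivity)).trans_eq (mul_one _)

lemma abs_deriv_heatKernel_le_of_le_abs {r Λ y : ℝ} (hr : 0 < r) (hΛ : 0 ≤ Λ) (hy : Λ ≤ |y|) :
    |deriv (heatKernel r) y| ≤ (2 * sqrt π)⁻¹ * (r⁻¹ * exp (-(Λ ^ 2 / 8) / r)) := by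
  refine (abs_deriv_heatKernel_le hr y).trans ?_
  have hΛy : Λ ^ 2 ≤ y ^ 2 := sq_abs y ▸ pow_le_pow_left₀ hΛ hy 2
  gcongr _ * (_ * exp ?_)
  rw [neg_div, neg_div, div_div, neg_le_neg_iff]
  gcongr

lemma integrableOn_Ioi_inv_mul_exp_neg_sq {b : ℝ} (hb : 0 < b) :
    IntegrableOn (fun z => z⁻¹ * exp (-z ^ 2)) (Ioi b) := by
  have hdom : IntegrableOn (fun z => b⁻¹ * exp (-1 * z ^ 2)) (Ioi b) :=
    ((integrable_exp_neg_mul_sq one_pos).const_mul b⁻¹).integrableOn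
  refine hdom.mono' ?_ ?_
  · refine ContinuousOn.aestronglyMeasurable ?_ measurableSet_Ioi
    exact (continuousOn_inv₀.mono fun z hz => (hb.trans hz).ne').mul (by fun_prop)
  · filter_upwards [ae_restrict_mem measurableSet_Ioi] with z hz
    have hz0 : 0 < z := hb.trans hz
    rw [norm_mul, norm_inv, norm_of_nonneg hz0.le, norm_of_nonneg (exp_pos _).le, neg_one_mul]
    gcongr
    exact le_of_lt hz

section InvSqSubstitution

variable {a b : ℝ}

lemma image_div_sq_Ioi (ha : 0 < a) (hb : 0 < b) :
    (fun z => a / z ^ 2) '' Ioi b = Ioo 0 (a / b ^ 2) := by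
  ext r
  constructor
  · rintro ⟨z, hz, rfl⟩
    have hz0 : 0 < z := hb.trans hz
    show 0 < a / z ^ 2 ∧ a / z ^ 2 < a / b ^ 2
    exact ⟨by positivity, by gcongr; exact hz⟩
  · rintro ⟨hr0, hr⟩
    refine ⟨sqrt (a / r), ?_, ?_⟩
    · rw [mem_Ioi, lt_sqrt hb.le, lt_div_iff₀ hr0, mul_comm, ← lt_div_iff₀ (by positivity)]
      exact hr
    · show a / sqrt (a / r) ^ 2 = r
      rw [sq_sqrt (by positivity)]
      field_simp

lemma injOn_div_sq_Ioi (ha : 0 < a) (hb : 0 ≤ b) : InjOn (fun z => a / z ^ 2) (Ioi b) := by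
  refine StrictAntiOn.injOn fun z₁ hz₁ z₂ _ h => ?_
  have : 0 < z₁ := lt_of_le_of_lt hb hz₁
  show a / z₂ ^ 2 < a / z₁ ^ 2
  gcongr

lemma hasDerivAt_div_sq {z : ℝ} (hz : z ≠ 0) :
    HasDerivAt (fun z => a / z ^ 2) (-(2 * a) / z ^ 3) z := by
  refine ((hasDerivAt_pow 2 z).fun_inv (pow_ne_zero 2 hz)).const_mul a |>.congr_deriv ?_
  field_simp
  ring

lemma abs_deriv_div_sq_smul_inv_mul_exp_neg_div (ha : 0 < a) {z : ℝ} (hz : 0 < z) :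
    |-(2 * a) / z ^ 3| • ((a / z ^ 2)⁻¹ * exp (-a / (a / z ^ 2))) = 2 * (z⁻¹ * exp (-z ^ 2)) := by
  have hexp : -a / (a / z ^ 2) = -z ^ 2 := by field_simp
  rw [hexp, smul_eq_mul, abs_div, abs_neg, abs_of_pos (by positivity : 0 < 2 * a),
    abs_of_pos (by positivity : 0 < z ^ 3)]
  field_simp

lemma integrableOn_Ioo_inv_mul_exp_neg_div (ha : 0 < a) (hb : 0 < b) :
    IntegrableOn (fun r => r⁻¹ * exp (-a / r)) (Ioo 0 (a / b ^ 2)) := by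
  rw [← image_div_sq_Ioi ha hb, integrableOn_image_iff_integrableOn_abs_deriv_smul measurableSet_Ioi
    (fun z hz => (hasDerivAt_div_sq (hb.trans hz).ne').hasDerivWithinAt) (injOn_div_sq_Ioi ha hb.le)]
  refine IntegrableOn.congr_fun ((integrableOn_Ioi_inv_mul_exp_neg_sq hb).const_mul 2)
    (fun z hz => ?_) measurableSet_Ioi
  exact (abs_deriv_div_sq_smul_inv_mul_exp_neg_div ha (hb.trans hz)).symm

lemma integral_Ioo_inv_mul_exp_neg_div (ha : 0 < a) (hb : 0 < b) :
    ∫ r in Ioo 0 (a / b ^ 2), r⁻¹ * exp (-a / r) = 2 * ∫ z in Ioi b, z⁻¹ * exp (-z ^ 2) := by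
  rw [← image_div_sq_Ioi ha hb, integral_image_eq_integral_abs_deriv_smul measurableSet_Ioi
    (fun z hz => (hasDerivAt_div_sq (hb.trans hz).ne').hasDerivWithinAt) (injOn_div_sq_Ioi ha hb.le),
    ← integral_const_mul]
  exact setIntegral_congr_fun measurableSet_Ioi fun z hz =>
    abs_deriv_div_sq_smul_inv_mul_exp_neg_div ha (hb.trans hz)

end InvSqSubstitution

lemma intervalIntegral_le_setIntegral_Ioo_of_abs_le_comp_sub {f g : ℝ → ℝ} {t σ : ℝ} (ht : 0 ≤ t)
    (htσ : t ≤ σ) (hg : IntegrableOn g (Ioo 0 σ)) (hg₀ : ∀ r ∈ Ioo 0 σ, 0 ≤ g r)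
    (hfg : ∀ τ ∈ Ioo 0 t, |f τ| ≤ g (t - τ)) :
    ∫ τ in 0..t, f τ ≤ ∫ r in Ioo 0 σ, g r := by
  have hgt : IntervalIntegrable g volume 0 t :=
    (intervalIntegrable_iff_integrableOn_Ioo_of_le ht).2 (hg.mono_set (Ioo_subset_Ioo_right htσ))
  have hbound : ∀ᵐ τ, τ ∈ Ioc 0 t → ‖f τ‖ ≤ g (t - τ) := by
    filter_upwards [volume.ae_ne t] with τ hτt hτ
    exact hfg τ ⟨hτ.1, hτ.2.lt_of_ne hτt⟩
  calc ∫ τ in 0..t, f τ ≤ ∫ τ in 0..t, g (t - τ) :=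
        (le_norm_self _).trans <| intervalIntegral.norm_integral_le_of_norm_le ht hbound
          (by simpa using (hgt.comp_sub_left t).symm)
    _ = ∫ r in 0..t, g r := by
        rw [intervalIntegral.integral_comp_sub_left, sub_self, sub_zero]
    _ ≤ ∫ r in Ioo 0 σ, g r := by
        rw [intervalIntegral.integral_of_le ht, integral_Ioc_eq_integral_Ioo]
        exact setIntegral_mono_set hg (ae_restrict_of_forall_mem measurableSet_Ioo hg₀)
          (Ioo_subset_Ioo_right htσ).eventuallyLE

theorem heat_kernel_separated_integral_bound (σ Λ : ℝ) (hσ : 0 < σ) (hΛ : 0 < Λ)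
    (s s₁ : ℝ → ℝ)
    (hsep : ∀ τ t : ℝ, 0 ≤ τ → τ < t → t ≤ σ → Λ ≤ |s t - s₁ τ|) :
    ∀ t : ℝ, 0 < t → t ≤ σ →
      (∫ τ in (0:ℝ)..t,
          |deriv (fun x => Real.exp (-(x - s₁ τ) ^ 2 / (4 * (t - τ))) /
              Real.sqrt (4 * π * (t - τ))) (s t)|)
        ≤ (Real.sqrt π)⁻¹ *
            ∫ z in Set.Ioi (Λ / Real.sqrt (8 * σ)), z⁻¹ * Real.exp (-z ^ 2) := by
  intro t ht htσ
  have hb : 0 < Λ / sqrt (8 * σ) := by positivity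
  have hσ_eq : Λ ^ 2 / 8 / (Λ / sqrt (8 * σ)) ^ 2 = σ := by
    rw [div_pow, sq_sqrt (by positivity)]; field_simp
  have hint := integrableOn_Ioo_inv_mul_exp_neg_div (a := Λ ^ 2 / 8) (by positivity) hb
  have hsub := integral_Ioo_inv_mul_exp_neg_div (a := Λ ^ 2 / 8) (by positivity) hb
  rw [hσ_eq] at hint hsub
  calc _ ≤ ∫ r in Ioo 0 σ, (2 * sqrt π)⁻¹ * (r⁻¹ * exp (-(Λ ^ 2 / 8) / r)) := by
        refine intervalIntegral_le_setIntegral_Ioo_of_abs_le_comp_sub ht.le htσ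
          (hint.const_mul _) (fun r hr => by have := hr.1; positivity) fun τ hτ => ?_
        change |(|deriv (fun x => heatKernel (t - τ) (x - s₁ τ)) (s t)|)| ≤ _
        rw [abs_abs, deriv_comp_sub_const]
        exact abs_deriv_heatKernel_le_of_le_abs (sub_pos.2 hτ.2) hΛ.le
          (hsep τ t hτ.1.le hτ.2 htσ)
    _ = _ := by
        rw [integral_const_mul, hsub]
        ring
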